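/- arXiv:2112.09811 — 2 statements merged into one kernel-verified Lean document; each statement's English description precedes it below -/
import Mathlib

section
/- Let G be a stochastic game with terminal set T and let v ∈ V. If Prob^{σ1,σ2}_{G,v}(◇T) < 1 for some strategy σ1 ∈ Σ1 and some fair strategy σ2, then there exist a memoryless and deterministic strategy σ1' for Player 1 and a fair strategy σ2' for Player 2 such that Prob^{σ1',σ2'}_{G,v}(◇T) < 1. -/
/-!
Pick a play `ω` that avoids `T` and is typical for `μ`: it starts at `v`, follows edges, is fair,
and, by a conditional Borel–Cantelli argument, visits every successor of a probabilistic vertex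
that it visits infinitely often. The set `S` of vertices visited infinitely often by `ω` contains
no terminal vertex, chance and Player 2 cannot leave it, and Player 1 can stay in it. Player 1
now plays positionally: stay in `S` inside `S`, and outside `S` move closer to `S`; Player 2
picks successors uniformly at random, which is fair. With positive probability the play follows
Player 1's path from `v` into `S`, and from there it almost surely never leaves `S`.
-/

open MeasureTheory
open scoped ENNReal Classical

/-- A turn-based two-player stochastic game on a finite vertex set `V`. -/
structure StochGame (V : Type*) [Fintype V] where
  /-- Player 1 vertices -/
  V1 : Finset V
  /-- Player 2 vertices -/
  V2 : Finset V
  /-- probabilistic vertices -/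
  VP : Finset V
  cover : ∀ v : V, v ∈ V1 ∨ v ∈ V2 ∨ v ∈ VP
  disj12 : ∀ v : V, ¬(v ∈ V1 ∧ v ∈ V2)
  disj1P : ∀ v : V, ¬(v ∈ V1 ∧ v ∈ VP)
  disj2P : ∀ v : V, ¬(v ∈ V2 ∧ v ∈ VP)
  /-- the probabilistic transition function -/
  δ : V → V → ℝ
  δ_nonneg : ∀ v v', 0 ≤ δ v v'
  δ_le_one : ∀ v v', δ v v' ≤ 1
  det : ∀ v : V, (v ∈ V1 ∨ v ∈ V2) → ∀ v', δ v v' = 0 ∨ δ v v' = 1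
  prob : ∀ v ∈ VP, ∑ v' : V, δ v v' = 1
  post_nonempty : ∀ v : V, ∃ v', 0 < δ v v'

namespace StochGame

variable {V : Type*} [Fintype V]

/-- successors of a vertex -/
def post (G : StochGame V) (v : V) : Set V := {v' | 0 < G.δ v v'}

/-- a vertex is terminal if `δ(v,v) = 1` and `δ(v,v') = 0` for `v' ≠ v`. -/
def Terminal (G : StochGame V) (v : V) : Prop :=
  G.δ v v = 1 ∧ ∀ v', v' ≠ v → G.δ v v' = 0

/-- A strategy for the player owning the vertices in `P`: a function assigning to each
finite history and current vertex a probability distribution over vertices, supported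
on successors when the current vertex belongs to `P`. -/
structure Strategy (G : StochGame V) (P : Finset V) where
  f : List V → V → V → ℝ
  nonneg : ∀ h v v', 0 ≤ f h v v'
  sum_one : ∀ h v, ∑ v' : V, f h v v' = 1
  support : ∀ h v, v ∈ P → ∀ v', 0 < f h v v' → 0 < G.δ v v'

variable {G : StochGame V} {P : Finset V}

/-- a memoryless strategy only depends on the current vertex -/
def Strategy.Memoryless (σ : Strategy G P) : Prop :=
  ∀ h h' cur, σ.f h cur = σ.f h' cur

/-- a deterministic (pure) strategy takes Dirac distributions as values -/
def Strategy.Deterministic (σ : Strategy G P) : Prop :=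
  ∀ h cur, ∃ v', ∀ u, σ.f h cur u = if u = v' then 1 else 0

/-- a semi-Markov strategy depends only on the initial vertex, the number of elapsed
steps and the current vertex -/
def Strategy.SemiMarkov (σ : Strategy G P) : Prop :=
  ∀ (v0 : V) (h h' : List V) (cur : V), h.length = h'.length →
    σ.f (v0 :: h) cur = σ.f (v0 :: h') cur

variable [DecidableEq V]

/-- one-step transition probability given strategies of both players -/
noncomputable def step (G : StochGame V) (σ1 : Strategy G G.V1) (σ2 : Strategy G G.V2)
    (h : List V) (v v' : V) : ℝ :=
  if v ∈ G.V1 then σ1.f h v v' else if v ∈ G.V2 then σ2.f h v v' else G.δ v v'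

/-- the history consisting of the first `i` vertices of `w` -/
def hist (w : ℕ → V) (i : ℕ) : List V := (List.range i).map w

/-- probability that the play starts with the vertices `w 0, w 1, …, w n` when
the game starts at `v` and the players use strategies `σ1`, `σ2`. -/
noncomputable def prefixProb (G : StochGame V) (σ1 : Strategy G G.V1) (σ2 : Strategy G G.V2)
    (v : V) (n : ℕ) (w : ℕ → V) : ℝ :=
  (if w 0 = v then 1 else 0) *
    ∏ i ∈ Finset.range n, G.step σ1 σ2 (hist w i) (w i) (w (i + 1))

/-- the cylinder of all infinite plays agreeing with `w` on the first `n+1` coordinates -/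
def cyl (n : ℕ) (w : ℕ → V) : Set (ℕ → V) := {ω | ∀ i ≤ n, ω i = w i}

variable [MeasurableSpace V]

/-- `μ` is the path measure of the game `G` starting at `v` under strategies `σ1, σ2`:
it is the (unique) probability measure on `V^ω` (with the product σ-algebra) whose
cylinder probabilities are given by the products of the transition probabilities. -/
def IsPathMeasure (G : StochGame V) (σ1 : Strategy G G.V1) (σ2 : Strategy G G.V2)
    (v : V) (μ : Measure (ℕ → V)) : Prop :=
  IsProbabilityMeasure μ ∧
    ∀ (n : ℕ) (w : ℕ → V), μ (cyl n w) = ENNReal.ofReal (G.prefixProb σ1 σ2 v n w)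

/-- the set of vertices occurring infinitely often in a play -/
def infOcc (ω : ℕ → V) : Set V := {u | ∀ N, ∃ n, N ≤ n ∧ ω n = u}

/-- the set of plays that are fair for Player 2 -/
def FP2 (G : StochGame V) : Set (ℕ → V) :=
  {ω | ∀ u ∈ G.V2, u ∈ infOcc ω → ∀ u' ∈ G.post u, u' ∈ infOcc ω}

/-- the event `◇T` that a terminal vertex is reached -/
def ReachT (G : StochGame V) : Set (ℕ → V) := {ω | ∃ i, G.Terminal (ω i)}

/-- A Player 2 strategy is (almost surely) fair if the fair plays have probability 1
under any Player 1 strategy and any initial vertex. -/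
def Fair (G : StochGame V) (σ2 : Strategy G G.V2) : Prop :=
  ∀ (σ1 : Strategy G G.V1) (v : V) (μ : Measure (ℕ → V)),
    G.IsPathMeasure σ1 σ2 v μ → μ G.FP2 = 1

/-- `G` is stopping under fairness: a terminal vertex is reached almost surely
whenever Player 2 plays a fair strategy. -/
def StoppingUnderFairness (G : StochGame V) : Prop :=
  ∀ (σ1 : Strategy G G.V1) (σ2 : Strategy G G.V2), G.Fair σ2 →
    ∀ (v : V) (μ : Measure (ℕ → V)), G.IsPathMeasure σ1 σ2 v μ → μ G.ReachT = 1

/-- the total accumulated reward of a play -/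
noncomputable def rew (r : V → ℝ) (ω : ℕ → V) : ℝ≥0∞ := ∑' i, ENNReal.ofReal (r (ω i))

/-- the expected total reward -/
noncomputable def expRew (μ : Measure (ℕ → V)) (r : V → ℝ) : ℝ≥0∞ := ∫⁻ ω, rew r ω ∂μ

end StochGame


namespace Relation

variable {α : Type*} (R : α → α → Prop) (S : Set α)

def reachWithin : ℕ → Set α
  | 0 => S
  | n + 1 => reachWithin n ∪ {x | ∃ y ∈ reachWithin n, R x y}

variable {R S}

@[simp] lemma reachWithin_zero : reachWithin R S 0 = S := rfl

lemma reachWithin_mono : Monotone (reachWithin R S) :=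
  monotone_nat_of_le_succ fun _ ↦ Set.subset_union_left

lemma subset_reachWithin (n : ℕ) : S ⊆ reachWithin R S n :=
  reachWithin_mono n.zero_le

lemma mem_reachWithin_of_path {w : ℕ → α} (hw : ∀ t, R (w t) (w (t + 1))) {m : ℕ}
    (hm : w m ∈ S) : w 0 ∈ reachWithin R S m := by
  induction m generalizing w with
  | zero => exact hm
  | succ m ih => exact Or.inr ⟨w 1, ih (w := fun t ↦ w (t + 1)) (fun t ↦ hw (t + 1)) hm, hw 0⟩

lemma exists_selector_mapsTo_reachWithin (hR : ∀ x, ∃ y, R x y) (hS : ∀ x ∈ S, ∃ y ∈ S, R x y) :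
    ∃ c : α → α, (∀ x, R x (c x)) ∧ (∀ x ∈ S, c x ∈ S) ∧
      ∀ n, Set.MapsTo c (reachWithin R S n) (reachWithin R S (n - 1)) := by
  have hsucc : ∀ x, ∃ y, R x y ∧ (x ∈ S → y ∈ S) ∧
      ∀ n, x ∈ reachWithin R S n → y ∈ reachWithin R S (n - 1) := by
    intro x
    by_cases hxS : x ∈ S
    · obtain ⟨y, hyS, hxy⟩ := hS x hxS
      exact ⟨y, hxy, fun _ ↦ hyS, fun n _ ↦ subset_reachWithin _ hyS⟩
    by_cases hreach : ∃ n, x ∈ reachWithin R S n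
    · have hx := Nat.find_spec hreach
      have hn0 : Nat.find hreach ≠ 0 := fun h0 ↦ hxS (by rwa [h0] at hx)
      obtain ⟨m, hm⟩ := Nat.exists_eq_succ_of_ne_zero hn0
      rw [hm] at hx
      obtain ⟨y, hy, hxy⟩ := hx.resolve_left (Nat.find_min hreach (by omega))
      refine ⟨y, hxy, fun h ↦ absurd h hxS, fun n hn ↦ reachWithin_mono ?_ hy⟩
      have := Nat.find_min' hreach hn
      omega
    · obtain ⟨y, hxy⟩ := hR x
      exact ⟨y, hxy, fun h ↦ absurd h hxS, fun n hn ↦ absurd ⟨n, hn⟩ hreach⟩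
  choose c hcR hcS hc using hsucc
  exact ⟨c, hcR, hcS, fun n x hx ↦ hc x n hx⟩

lemma iterate_mem_reachWithin {c : α → α}
    (hc : ∀ n, Set.MapsTo c (reachWithin R S n) (reachWithin R S (n - 1)))
    {x : α} {n : ℕ} (hx : x ∈ reachWithin R S n) (k : ℕ) : c^[k] x ∈ reachWithin R S (n - k) := by
  induction k with
  | zero => exact hx
  | succ k ih => rw [Function.iterate_succ_apply', Nat.sub_add_eq]; exact hc _ ih

end Relation

namespace StochGame

section Prefix

variable {V : Type*}

lemma hist_congr {ω ω' : ℕ → V} {n : ℕ} (h : ∀ i < n, ω i = ω' i) : hist ω n = hist ω' n :=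
  List.map_congr_left fun i hi ↦ h i (List.mem_range.mp hi)

/-- A canonical play with prefix `x`; padding with `x 0` (rather than `x (last n)`) makes
`extend_snoc` an equality of plays. -/
def extend {n : ℕ} (x : Fin (n + 1) → V) (i : ℕ) : V :=
  if h : i ≤ n then x ⟨i, Nat.lt_succ_of_le h⟩ else x 0

lemma extend_of_le {n : ℕ} (x : Fin (n + 1) → V) {i : ℕ} (hi : i ≤ n) :
    extend x i = x ⟨i, Nat.lt_succ_of_le hi⟩ :=
  dif_pos hi

lemma extend_snoc {n : ℕ} (x : Fin (n + 1) → V) (b : V) :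
    extend (Fin.snoc x b : Fin (n + 2) → V) = Function.update (extend x) (n + 1) b := by
  funext i
  rcases lt_trichotomy i (n + 1) with hi | rfl | hi
  · rw [Function.update_of_ne hi.ne, extend_of_le _ hi.le, extend_of_le _ (Nat.lt_succ_iff.mp hi)]
    exact Fin.snoc_castSucc (α := fun _ ↦ V) b x ⟨i, hi⟩
  · rw [Function.update_self, extend_of_le _ le_rfl]
    exact Fin.snoc_last (α := fun _ ↦ V) b x
  · rw [Function.update_of_ne hi.ne', extend, extend, dif_neg (by omega), dif_neg (by omega)]
    exact Fin.snoc_castSucc (α := fun _ ↦ V) b x 0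

end Prefix

section Potential

variable {V : Type*} (u u' : V) (N : ℕ)

def NoTransition (n : ℕ) (ω : ℕ → V) : Prop := ∀ t < n, N ≤ t → ω t = u → ω (t + 1) ≠ u'

variable {u u' N}

lemma noTransition_dependsOn (n : ℕ) : DependsOn (NoTransition u u' N n) (Set.Iic n) :=
  fun ω ω' h ↦ by
    have h' : ∀ i ≤ n, ω i = ω' i := h
    refine propext (forall₂_congr fun t ht ↦ ?_)
    rw [h' t ht.le, h' (t + 1) ht]

lemma noTransition_update_succ (n : ℕ) (ω : ℕ → V) (b : V) :
    NoTransition u u' N (n + 1) (Function.update ω (n + 1) b) ↔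
      NoTransition u u' N n ω ∧ (N ≤ n → ω n = u → b ≠ u') := by
  rw [NoTransition, Nat.forall_lt_succ_right, Function.update_self,
    Function.update_of_ne (by omega : n ≠ n + 1)]
  refine and_congr_left' (forall₂_congr fun t ht ↦ ?_)
  rw [Function.update_of_ne (by omega), Function.update_of_ne (by omega)]

variable (u u' N) [DecidableEq V]

def visits (n : ℕ) (ω : ℕ → V) : ℕ := ((Finset.range n).filter fun t ↦ N ≤ t ∧ ω t = u).card

/-- The potential `(1 - p) ^ (j - visits)` of a play that has not yet moved from `u` to `u'`:
if every visit to `u` moves to `u'` with probability at least `p`, it is a supermartingale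
starting at `(1 - p) ^ j`, and it equals `1` once `u` has been visited `j` times. -/
noncomputable def potential (p : ℝ) (j n : ℕ) (ω : ℕ → V) : ℝ :=
  if NoTransition u u' N n ω then (1 - p) ^ (j - visits u N n ω) else 0

variable {u u' N}

lemma visits_mono (ω : ℕ → V) : Monotone fun n ↦ visits u N n ω := fun _ _ h ↦
  Finset.card_le_card (Finset.filter_subset_filter _ (Finset.range_subset_range.mpr h))

lemma exists_le_visits {ω : ℕ → V} (hu : u ∈ infOcc ω) (j : ℕ) : ∃ n, j ≤ visits u N n ω := by
  have hinf : {t | N ≤ t ∧ ω t = u}.Infinite := Set.infinite_of_forall_exists_gt fun a ↦ by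
    obtain ⟨t, ht, htu⟩ := hu (max (a + 1) N)
    exact ⟨t, ⟨le_of_max_le_right ht, htu⟩, le_of_max_le_left ht⟩
  obtain ⟨T, hT, rfl⟩ := hinf.exists_subset_card_eq j
  refine ⟨T.sup id + 1, Finset.card_le_card fun t ht ↦ Finset.mem_filter.mpr ⟨?_, hT ht⟩⟩
  exact Finset.mem_range.mpr (Nat.lt_succ_of_le (Finset.le_sup (f := id) ht))

lemma visits_dependsOn (n : ℕ) : DependsOn (visits u N n) (Set.Iic n) := fun ω ω' h ↦
  congrArg Finset.card <| Finset.filter_congr fun t ht ↦ by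
    rw [h t (Set.mem_Iic.mpr (Finset.mem_range.mp ht).le)]

lemma visits_update_succ (n : ℕ) (ω : ℕ → V) (b : V) :
    visits u N (n + 1) (Function.update ω (n + 1) b) =
      visits u N n ω + if N ≤ n ∧ ω n = u then 1 else 0 := by
  simp only [visits, Finset.card_filter, Finset.sum_range_succ]
  congr 1
  · refine Finset.sum_congr rfl fun t ht ↦ ?_
    rw [Function.update_of_ne (by simp at ht; omega)]
  · rw [Function.update_of_ne (by omega)]

variable {p : ℝ} {j : ℕ}

lemma potential_nonneg (hp : p ≤ 1) (n : ℕ) (ω : ℕ → V) : 0 ≤ potential u u' N p j n ω := by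
  unfold potential
  split_ifs
  exacts [pow_nonneg (by linarith) _, le_rfl]

lemma potential_zero : potential u u' N p j 0 = fun _ ↦ (1 - p) ^ j := by
  funext ω
  simp [potential, NoTransition, visits]

lemma potential_eq_one {n : ℕ} {ω : ℕ → V} (h : NoTransition u u' N n ω)
    (hj : j ≤ visits u N n ω) : potential u u' N p j n ω = 1 := by
  rw [potential, if_pos h, Nat.sub_eq_zero_of_le hj, pow_zero]

lemma mul_pow_pred_le {r s : ℝ} (hr0 : 0 ≤ r) (hr1 : r ≤ 1) (hs : s ≤ r) (k : ℕ) :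
    s * r ^ (k - 1) ≤ r ^ k := by
  refine (mul_le_mul_of_nonneg_right hs (pow_nonneg hr0 _)).trans ?_
  cases k with
  | zero => simpa using hr1
  | succ k => rw [Nat.add_sub_cancel, pow_succ, mul_comm]

lemma sum_mul_potential_update_le [Fintype V] (hp0 : 0 ≤ p) (hp : p ≤ 1) {q : V → ℝ}
    (hq : ∑ b, q b = 1) (n : ℕ) (ω : ℕ → V) (hqu : N ≤ n → ω n = u → p ≤ q u') :
    ∑ b, q b * potential u u' N p j (n + 1) (Function.update ω (n + 1) b) ≤
      potential u u' N p j n ω := by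
  by_cases hA : NoTransition u u' N n ω
  swap
  · simp [potential, noTransition_update_succ, hA]
  by_cases hu : N ≤ n ∧ ω n = u
  · set c := (1 - p) ^ (j - visits u N n ω - 1)
    have hterm : ∀ b, potential u u' N p j (n + 1) (Function.update ω (n + 1) b) =
        c - if b = u' then c else 0 := fun b ↦ by
      by_cases hb : b = u' <;>
        simp [potential, noTransition_update_succ, visits_update_succ, hA, hu, hb, c,
          Nat.sub_add_eq]
    simp only [hterm, mul_sub, mul_ite, mul_zero, Finset.sum_sub_distrib, ← Finset.sum_mul, hq,
      Finset.sum_ite_eq', Finset.mem_univ, if_true, one_mul]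
    rw [← one_sub_mul, potential, if_pos hA]
    exact mul_pow_pred_le (by linarith) (by linarith) (by linarith [hqu hu.1 hu.2]) _
  · have hterm : ∀ b, potential u u' N p j (n + 1) (Function.update ω (n + 1) b) =
        potential u u' N p j n ω := fun b ↦ by
      simp only [potential, noTransition_update_succ, visits_update_succ, if_neg hu, add_zero]
      have hcond : N ≤ n → ω n = u → b ≠ u' := fun h1 h2 ↦ absurd ⟨h1, h2⟩ hu
      simp only [and_iff_left hcond]
    simp only [hterm, ← Finset.sum_mul, hq, one_mul, le_refl]

end Potential

section InfOcc

variable {V : Type*} {ω : ℕ → V}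

lemma mem_infOcc_iff_frequently {x : V} : x ∈ infOcc ω ↔ ∃ᶠ n in Filter.atTop, ω n = x :=
  Filter.frequently_atTop.symm

variable [Finite V]

lemma infOcc_nonempty (ω : ℕ → V) : (infOcc ω).Nonempty := by
  obtain ⟨x, hx⟩ := Filter.frequently_exists.mp <|
    Filter.Frequently.of_forall (f := Filter.atTop) fun n ↦ (⟨ω n, rfl⟩ : ∃ x, ω n = x)
  exact ⟨x, mem_infOcc_iff_frequently.mpr hx⟩

lemma exists_mem_infOcc_succ {x : V} (hx : x ∈ infOcc ω) :
    ∃ y ∈ infOcc ω, ∃ t, ω t = x ∧ ω (t + 1) = y := by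
  obtain ⟨y, hy⟩ := Filter.frequently_exists.mp
    ((mem_infOcc_iff_frequently.mp hx).mono fun t ht ↦
      (⟨ω (t + 1), ht, rfl⟩ : ∃ y, ω t = x ∧ ω (t + 1) = y))
  exact ⟨y, mem_infOcc_iff_frequently.mpr ((Filter.tendsto_add_atTop_nat 1).frequently
    (hy.mono fun _ ht ↦ ht.2)), hy.exists⟩

end InfOcc

section Measurability

variable {V : Type*} [MeasurableSpace V] [MeasurableSingletonClass V]

lemma measurableSet_cyl (n : ℕ) (w : ℕ → V) : MeasurableSet (cyl n w) := by
  unfold cyl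
  measurability

variable [Fintype V] {G : StochGame V}

lemma measurableSet_FP2 : MeasurableSet G.FP2 := by
  unfold FP2 infOcc
  measurability

end Measurability

section Trap

variable {V : Type*} [Fintype V]

lemma card_post_pos (G : StochGame V) (x : V) :
    0 < (Finset.univ.filter fun y ↦ 0 < G.δ x y).card :=
  let ⟨y, hy⟩ := G.post_nonempty x
  Finset.card_pos.mpr ⟨y, Finset.mem_filter.mpr ⟨Finset.mem_univ y, hy⟩⟩

variable {G : StochGame V}

structure IsTrap (G : StochGame V) (S : Set V) : Prop where
  not_terminal : ∀ x ∈ S, ¬G.Terminal x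
  exists_mem_post : ∀ x ∈ S, ∃ y ∈ S, y ∈ G.post x
  post_subset : ∀ x ∈ S, x ∉ G.V1 → G.post x ⊆ S

lemma isTrap_infOcc {ω : ℕ → V} (hT : ω ∉ G.ReachT) (hpost : ∀ t, ω (t + 1) ∈ G.post (ω t))
    (hFP2 : ω ∈ G.FP2) (hVP : ∀ u ∈ G.VP, ∀ y ∈ G.post u, u ∈ infOcc ω → y ∈ infOcc ω) :
    G.IsTrap (infOcc ω) where
  not_terminal x hx hterm := by
    obtain ⟨t, -, rfl⟩ := hx 0
    exact hT ⟨t, hterm⟩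
  exists_mem_post x hx := by
    obtain ⟨y, hy, t, rfl, rfl⟩ := exists_mem_infOcc_succ hx
    exact ⟨_, hy, hpost t⟩
  post_subset x hx hx1 y hy := by
    rcases G.cover x with h | h | h
    exacts [absurd h hx1, hFP2 x h hx y hy, hVP x h y hy hx]

variable {S : Set V}

lemma IsTrap.not_terminal_of_mem_reachWithin (hS : G.IsTrap S) {n : ℕ} {x : V}
    (hx : x ∈ Relation.reachWithin (fun x y ↦ y ∈ G.post x) S n) : ¬G.Terminal x := by
  induction n generalizing x with
  | zero => exact hS.not_terminal x hx
  | succ n ih =>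
    rcases hx with hx | ⟨y, hy, hxy⟩
    · exact ih hx
    · intro hterm
      -- the only successor of a terminal vertex is itself
      obtain rfl : y = x := by_contra fun hne ↦ (hxy : 0 < G.δ x y).ne' (hterm.2 y hne)
      exact ih hy hterm

end Trap

variable {V : Type*} [Fintype V] [DecidableEq V] {G : StochGame V}

section Step

variable (σ1 : G.Strategy G.V1) (σ2 : G.Strategy G.V2)

lemma step_nonneg (h : List V) (x y : V) : 0 ≤ G.step σ1 σ2 h x y := by
  unfold step
  split_ifs
  exacts [σ1.nonneg .., σ2.nonneg .., G.δ_nonneg ..]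

lemma sum_step (h : List V) (x : V) : ∑ y, G.step σ1 σ2 h x y = 1 := by
  unfold step
  split_ifs with h1 h2
  · exact σ1.sum_one h x
  · exact σ2.sum_one h x
  · exact G.prob x ((G.cover x).resolve_left h1 |>.resolve_left h2)

lemma step_le_one (h : List V) (x y : V) : G.step σ1 σ2 h x y ≤ 1 :=
  sum_step σ1 σ2 h x ▸
    Finset.single_le_sum (fun y _ ↦ step_nonneg σ1 σ2 h x y) (Finset.mem_univ y)

lemma mem_post_of_step_pos {h : List V} {x y : V} (hxy : 0 < G.step σ1 σ2 h x y) :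
    y ∈ G.post x := by
  unfold step at hxy
  split_ifs at hxy with h1 h2
  exacts [σ1.support h x h1 y hxy, σ2.support h x h2 y hxy, hxy]

lemma step_of_mem_V1 {h : List V} {x : V} (hx : x ∈ G.V1) (y : V) :
    G.step σ1 σ2 h x y = σ1.f h x y :=
  if_pos hx

lemma step_of_mem_V2 {h : List V} {x : V} (hx : x ∈ G.V2) (y : V) :
    G.step σ1 σ2 h x y = σ2.f h x y := by
  rw [step, if_neg fun h1 ↦ G.disj12 x ⟨h1, hx⟩, if_pos hx]

lemma step_of_mem_VP {h : List V} {x : V} (hx : x ∈ G.VP) (y : V) :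
    G.step σ1 σ2 h x y = G.δ x y := by
  rw [step, if_neg fun h1 ↦ G.disj1P x ⟨h1, hx⟩, if_neg fun h2 ↦ G.disj2P x ⟨h2, hx⟩]

variable (v : V)

lemma prefixProb_nonneg (n : ℕ) (ω : ℕ → V) : 0 ≤ G.prefixProb σ1 σ2 v n ω :=
  mul_nonneg (by split_ifs <;> norm_num)
    (Finset.prod_nonneg fun _ _ ↦ step_nonneg σ1 σ2 _ _ _)

lemma prefixProb_pos {n : ℕ} {ω : ℕ → V} (h0 : ω 0 = v)
    (hstep : ∀ i < n, 0 < G.step σ1 σ2 (hist ω i) (ω i) (ω (i + 1))) :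
    0 < G.prefixProb σ1 σ2 v n ω :=
  mul_pos (by simp [h0]) (Finset.prod_pos fun i hi ↦ hstep i (Finset.mem_range.mp hi))

lemma prefixProb_dependsOn (n : ℕ) : DependsOn (G.prefixProb σ1 σ2 v n) (Set.Iic n) := by
  intro ω ω' h
  have h' : ∀ i ≤ n, ω i = ω' i := h
  unfold prefixProb
  rw [h' 0 n.zero_le]
  refine congrArg _ (Finset.prod_congr rfl fun i hi ↦ ?_)
  have hi : i < n := Finset.mem_range.mp hi
  rw [hist_congr fun j hj ↦ h' j (by omega), h' i hi.le, h' (i + 1) hi]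

lemma prefixProb_update_succ (n : ℕ) (ω : ℕ → V) (b : V) :
    G.prefixProb σ1 σ2 v (n + 1) (Function.update ω (n + 1) b) =
      G.prefixProb σ1 σ2 v n ω * G.step σ1 σ2 (hist ω n) (ω n) b := by
  have hagree : ∀ i ≤ n, Function.update ω (n + 1) b i = ω i := fun i hi ↦
    Function.update_of_ne (by omega) _ _
  rw [prefixProb, Finset.prod_range_succ, ← mul_assoc, ← prefixProb,
    prefixProb_dependsOn σ1 σ2 v n hagree, hist_congr fun i hi ↦ hagree i hi.le,
    hagree n le_rfl, Function.update_self]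

end Step

variable (σ1 : G.Strategy G.V1) (σ2 : G.Strategy G.V2) (v : V)

/-- The expectation of `F`, provided `F` depends only on the first `n + 1` positions of the
play. -/
noncomputable def prefixExp (n : ℕ) (F : (ℕ → V) → ℝ) : ℝ :=
  ∑ x : Fin (n + 1) → V, G.prefixProb σ1 σ2 v n (extend x) * F (extend x)

lemma prefixExp_zero_const (c : ℝ) : prefixExp σ1 σ2 v 0 (fun _ ↦ c) = c := by
  rw [prefixExp, ← Finset.sum_mul,
    ← (Equiv.funUnique (Fin 1) V).symm.sum_comp]
  simp [prefixProb, extend]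

lemma prefixExp_succ (n : ℕ) (F : (ℕ → V) → ℝ) :
    prefixExp σ1 σ2 v (n + 1) F = prefixExp σ1 σ2 v n fun ω ↦
      ∑ b, G.step σ1 σ2 (hist ω n) (ω n) b * F (Function.update ω (n + 1) b) := by
  rw [prefixExp, ← (Fin.snocEquiv fun _ ↦ V).sum_comp, Fintype.sum_prod_type_right, prefixExp]
  refine Finset.sum_congr rfl fun x _ ↦ ?_
  rw [Finset.mul_sum]
  refine Finset.sum_congr rfl fun b _ ↦ ?_
  change G.prefixProb σ1 σ2 v (n + 1) (extend (Fin.snoc x b)) * F (extend (Fin.snoc x b)) = _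
  rw [extend_snoc, prefixProb_update_succ, mul_assoc]

lemma prefixExp_mono (n : ℕ) {F F' : (ℕ → V) → ℝ} (h : ∀ ω, F ω ≤ F' ω) :
    prefixExp σ1 σ2 v n F ≤ prefixExp σ1 σ2 v n F' :=
  Finset.sum_le_sum fun _ _ ↦ mul_le_mul_of_nonneg_left (h _) (prefixProb_nonneg σ1 σ2 v _ _)

variable {σ1 σ2 v}

lemma prefixExp_potential_le {u u' : V} {p : ℝ} (hp0 : 0 ≤ p)
    (hstep : ∀ h, p ≤ G.step σ1 σ2 h u u') (N j n : ℕ) :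
    prefixExp σ1 σ2 v n (potential u u' N p j n) ≤ (1 - p) ^ j := by
  have hp1 : p ≤ 1 := (hstep []).trans (step_le_one σ1 σ2 [] u u')
  induction n with
  | zero => rw [potential_zero, prefixExp_zero_const]
  | succ n ih =>
    rw [prefixExp_succ]
    refine (prefixExp_mono σ1 σ2 v n fun ω ↦ ?_).trans ih
    exact sum_mul_potential_update_le hp0 hp1 (sum_step σ1 σ2 _ _) n ω fun _ hu ↦ hu ▸ hstep _

variable {P : Finset V}

def Strategy.pure (c : V → V) (hc : ∀ x, 0 < G.δ x (c x)) : G.Strategy P where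
  f _ x y := if y = c x then 1 else 0
  nonneg _ _ _ := by split_ifs <;> norm_num
  sum_one _ x := by simp
  support _ x _ y hy := by
    split_ifs at hy with h
    · exact h ▸ hc x
    · exact absurd hy (lt_irrefl 0)

noncomputable def Strategy.uniform : G.Strategy P where
  f _ x y := if 0 < G.δ x y then ((Finset.univ.filter fun z ↦ 0 < G.δ x z).card : ℝ)⁻¹ else 0
  nonneg _ _ _ := by split_ifs <;> positivity
  sum_one _ x := by
    rw [← Finset.sum_filter, Finset.sum_const, nsmul_eq_mul,
      mul_inv_cancel₀ (Nat.cast_ne_zero.mpr (card_post_pos G x).ne')]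
  support _ x _ y hy := by
    by_contra hxy
    rw [if_neg hxy] at hy
    exact lt_irrefl 0 hy

section Step

variable {c : V → V} (hc : ∀ x, 0 < G.δ x (c x)) (h : List V) {x : V}

lemma step_pure_uniform_pos :
    0 < G.step (.pure c hc) .uniform h x (c x) := by
  unfold step
  split_ifs
  · simp [Strategy.pure]
  · simpa [Strategy.uniform, hc x] using card_post_pos G x
  · exact hc x

lemma eq_of_step_pure_pos {σ2 : G.Strategy G.V2} (hx : x ∈ G.V1) {y : V}
    (hxy : 0 < G.step (.pure c hc) σ2 h x y) : y = c x := by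
  rw [step_of_mem_V1 _ _ hx] at hxy
  by_contra hne
  simp [Strategy.pure, hne] at hxy

end Step

variable [MeasurableSpace V] {μ : Measure (ℕ → V)}

lemma IsPathMeasure.measure_le_sum (hμ : G.IsPathMeasure σ1 σ2 v μ) {n : ℕ} {s : Set (ℕ → V)}
    (hs : DependsOn (· ∈ s) (Set.Iic n)) :
    μ s ≤ ∑ x : Fin (n + 1) → V with extend x ∈ s,
      ENNReal.ofReal (G.prefixProb σ1 σ2 v n (extend x)) := by
  set T := Finset.univ.filter fun x : Fin (n + 1) → V ↦ extend x ∈ s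
  have hcover : s ⊆ ⋃ x ∈ T, cyl n (extend x) := by
    intro ω hω
    have hagree : ∀ i ≤ n, ω i = extend (fun j : Fin (n + 1) ↦ ω j) i := fun i hi ↦
      (extend_of_le (fun j : Fin (n + 1) ↦ ω j) hi).symm
    have hext : extend (fun j : Fin (n + 1) ↦ ω j) ∈ s := (hs hagree).mp hω
    exact Set.mem_biUnion (Finset.mem_filter.mpr ⟨Finset.mem_univ _, hext⟩) hagree
  calc μ s ≤ μ (⋃ x ∈ T, cyl n (extend x)) := measure_mono hcover
    _ ≤ _ := measure_biUnion_finset_le _ _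
    _ = _ := Finset.sum_congr rfl fun x _ ↦ hμ.2 n (extend x)

lemma IsPathMeasure.measure_eq_zero (hμ : G.IsPathMeasure σ1 σ2 v μ) {n : ℕ} {s : Set (ℕ → V)}
    (hs : DependsOn (· ∈ s) (Set.Iic n)) (h : ∀ ω ∈ s, G.prefixProb σ1 σ2 v n ω = 0) :
    μ s = 0 := by
  refine le_antisymm ((hμ.measure_le_sum hs).trans_eq ?_) zero_le
  exact Finset.sum_eq_zero fun x hx ↦ by rw [h _ (Finset.mem_filter.mp hx).2, ENNReal.ofReal_zero]

lemma IsPathMeasure.measure_le_prefixExp (hμ : G.IsPathMeasure σ1 σ2 v μ) {n : ℕ}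
    {s : Set (ℕ → V)} (hs : DependsOn (· ∈ s) (Set.Iic n)) {F : (ℕ → V) → ℝ}
    (hF0 : ∀ ω, 0 ≤ F ω) (hF1 : ∀ ω ∈ s, 1 ≤ F ω) :
    μ s ≤ ENNReal.ofReal (prefixExp σ1 σ2 v n F) := by
  have hP := prefixProb_nonneg σ1 σ2 v n
  refine (hμ.measure_le_sum hs).trans ?_
  rw [prefixExp, ENNReal.ofReal_sum_of_nonneg fun x _ ↦ mul_nonneg (hP _) (hF0 _),
    Finset.sum_filter]
  refine Finset.sum_le_sum fun x _ ↦ ?_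
  split_ifs with hx
  · exact ENNReal.ofReal_le_ofReal (le_mul_of_one_le_right (hP _) (hF1 _ hx))
  · exact zero_le

lemma IsPathMeasure.ae_start (hμ : G.IsPathMeasure σ1 σ2 v μ) : ∀ᵐ ω ∂μ, ω 0 = v := by
  refine ae_iff.2 (hμ.measure_eq_zero (n := 0) (fun ω ω' h ↦ ?_) fun ω hω ↦ ?_)
  · simp only [Set.mem_ofPred_eq, h 0 (Set.mem_Iic.2 le_rfl)]
  · simp [prefixProb, show ω 0 ≠ v from hω]

lemma IsPathMeasure.ae_step_pos (hμ : G.IsPathMeasure σ1 σ2 v μ) :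
    ∀ᵐ ω ∂μ, ∀ t, 0 < G.step σ1 σ2 (hist ω t) (ω t) (ω (t + 1)) := by
  refine ae_all_iff.2 fun t ↦ ae_iff.2 <|
    hμ.measure_eq_zero (n := t + 1) (fun ω ω' h ↦ ?_) fun ω hω ↦ ?_
  · have h' : ∀ i ≤ t + 1, ω i = ω' i := h
    simp only [Set.mem_ofPred_eq, hist_congr fun i (hi : i < t) ↦ h' i (by omega), h' t (by omega),
      h' (t + 1) le_rfl]
  · have hzero := le_antisymm (not_lt.mp hω) (step_nonneg σ1 σ2 _ _ _)
    rw [prefixProb, Finset.prod_range_succ, hzero, mul_zero, mul_zero]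

section BorelCantelli

variable {u u' : V} {p : ℝ}

lemma IsPathMeasure.measure_noTransition_le (hμ : G.IsPathMeasure σ1 σ2 v μ) (hp0 : 0 ≤ p)
    (hstep : ∀ h, p ≤ G.step σ1 σ2 h u u') (N j n : ℕ) :
    μ {ω | NoTransition u u' N n ω ∧ j ≤ visits u N n ω} ≤ ENNReal.ofReal ((1 - p) ^ j) := by
  have hp1 : p ≤ 1 := (hstep []).trans (step_le_one σ1 σ2 [] u u')
  have hs : DependsOn (· ∈ {ω | NoTransition u u' N n ω ∧ j ≤ visits u N n ω}) (Set.Iic n) :=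
    fun ω ω' h ↦ by
      simp only [Set.mem_ofPred_eq, noTransition_dependsOn n h, visits_dependsOn n h]
  refine (hμ.measure_le_prefixExp hs (potential_nonneg hp1 n) fun ω hω ↦
    (potential_eq_one hω.1 hω.2).ge).trans ?_
  exact ENNReal.ofReal_le_ofReal (prefixExp_potential_le hp0 hstep N j n)

lemma IsPathMeasure.measure_infOcc_noTransition (hμ : G.IsPathMeasure σ1 σ2 v μ) (hp : 0 < p)
    (hstep : ∀ h, p ≤ G.step σ1 σ2 h u u') (N : ℕ) :
    μ {ω | u ∈ infOcc ω ∧ ∀ n, NoTransition u u' N n ω} = 0 := by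
  set A : ℕ → ℕ → Set (ℕ → V) := fun j n ↦
    {ω | (∀ m, NoTransition u u' N m ω) ∧ j ≤ visits u N n ω}
  have hbound : ∀ j, μ {ω | u ∈ infOcc ω ∧ ∀ n, NoTransition u u' N n ω} ≤
      ENNReal.ofReal ((1 - p) ^ j) := fun j ↦ by
    have hmono : Monotone (A j) := fun n m hnm ω hω ↦ ⟨hω.1, hω.2.trans (visits_mono ω hnm)⟩
    calc _ ≤ μ (⋃ n, A j n) := measure_mono fun ω hω ↦
          Set.mem_iUnion.mpr ((exists_le_visits hω.1 j).imp fun _ hn ↦ ⟨hω.2, hn⟩)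
      _ = ⨆ n, μ (A j n) := hmono.measure_iUnion
      _ ≤ _ := iSup_le fun n ↦ le_trans (measure_mono fun ω (hω : ω ∈ A j n) ↦
          show ω ∈ {ω | NoTransition u u' N n ω ∧ j ≤ visits u N n ω} from ⟨hω.1 n, hω.2⟩)
          (hμ.measure_noTransition_le hp.le hstep N j n)
  have hlim : Filter.Tendsto (fun j : ℕ ↦ ENNReal.ofReal ((1 - p) ^ j)) Filter.atTop (nhds 0) := by
    have hp1 : p ≤ 1 := (hstep []).trans (step_le_one σ1 σ2 [] u u')
    simpa using ENNReal.tendsto_ofReal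
      (tendsto_pow_atTop_nhds_zero_of_lt_one (by linarith) (by linarith))
  exact le_antisymm (ge_of_tendsto' hlim hbound) zero_le

/-- A conditional Borel–Cantelli lemma. -/
theorem IsPathMeasure.ae_mem_infOcc_of_le_step (hμ : G.IsPathMeasure σ1 σ2 v μ) (hp : 0 < p)
    (hstep : ∀ h, p ≤ G.step σ1 σ2 h u u') : ∀ᵐ ω ∂μ, u ∈ infOcc ω → u' ∈ infOcc ω := by
  refine ae_iff.2 (measure_mono_null (fun ω hω ↦ ?_)
    (measure_iUnion_null fun N ↦ hμ.measure_infOcc_noTransition hp hstep N))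
  simp only [Set.mem_ofPred_eq, Classical.not_imp, infOcc, not_forall, not_exists, not_and] at hω
  obtain ⟨hu, N, hN⟩ := hω
  exact Set.mem_iUnion.mpr ⟨N, hu, fun n t _ hNt _ ↦ hN (t + 1) (by omega)⟩

end BorelCantelli

variable [MeasurableSingletonClass V]

lemma Fair.ae_mem_FP2 {σ1 : G.Strategy G.V1} {σ2 : G.Strategy G.V2} (hfair : G.Fair σ2) {v : V}
    {μ : Measure (ℕ → V)} (hμ : G.IsPathMeasure σ1 σ2 v μ) : ∀ᵐ ω ∂μ, ω ∈ G.FP2 := by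
  have := hμ.1
  rw [ae_mem_iff_measure_eq measurableSet_FP2.nullMeasurableSet, hfair σ1 v μ hμ, measure_univ]

theorem fair_uniform : G.Fair .uniform := by
  intro σ1 v μ hμ
  have := hμ.1
  have hae : ∀ᵐ ω ∂μ, ∀ u ∈ (G.V2 : Set V), ∀ u' ∈ G.post u, u ∈ infOcc ω → u' ∈ infOcc ω :=
    (ae_ball_iff (Set.toFinite _).countable).mpr fun u hu ↦
      (ae_ball_iff (Set.toFinite _).countable).mpr fun u' hu' ↦
        hμ.ae_mem_infOcc_of_le_step (inv_pos.mpr (Nat.cast_pos.mpr (card_post_pos G u)))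
          fun h ↦ by simp [step_of_mem_V2 _ _ hu, Strategy.uniform, show 0 < G.δ u u' from hu']
  rw [← measure_univ (μ := μ), ← ae_mem_iff_measure_eq measurableSet_FP2.nullMeasurableSet]
  exact hae.mono fun ω hω u hu hinf u' hu' ↦ hω u hu u' hu' hinf


variable {S : Set V}

lemma IsTrap.measure_reachT_lt_one (hS : G.IsTrap S) {c : V → V} (hc : ∀ x, 0 < G.δ x (c x))
    (hcS : ∀ x ∈ S, c x ∈ S) {k : ℕ} (hk : c^[k] v ∈ S) (hpath : ∀ i, ¬G.Terminal (c^[i] v))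
    {μ : Measure (ℕ → V)} (hμ : G.IsPathMeasure (.pure c hc) .uniform v μ) : μ G.ReachT < 1 := by
  have := hμ.1
  set q : ℕ → V := fun i ↦ c^[i] v
  have hcyl : 0 < μ (cyl k q) := by
    rw [hμ.2]
    refine ENNReal.ofReal_pos.mpr (prefixProb_pos _ _ _ rfl fun i _ ↦ ?_)
    simpa only [q, Function.iterate_succ_apply'] using step_pure_uniform_pos hc _ (x := q i)
  have hstay : ∀ h x y, x ∈ S → 0 < G.step (.pure c hc) .uniform h x y → y ∈ S := by
    intro h x y hx hxy
    by_cases hx1 : x ∈ G.V1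
    · exact eq_of_step_pure_pos hc h hx1 hxy ▸ hcS x hx
    · exact hS.post_subset x hx hx1 (mem_post_of_step_pos _ _ hxy)
  have hsafe : ∀ᵐ ω ∂μ, ω ∈ cyl k q → ω ∉ G.ReachT := by
    filter_upwards [hμ.ae_step_pos] with ω hω hωq ⟨t, ht⟩
    rcases le_or_gt t k with htk | hkt
    · exact hpath t (by rwa [hωq t htk] at ht)
    · have hin : ∀ t, k ≤ t → ω t ∈ S := fun t hkt ↦ by
        induction t, hkt using Nat.le_induction with
        | base => exact (hωq k le_rfl).symm ▸ hk
        | succ t _ ih => exact hstay _ _ _ ih (hω t)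
      exact hS.not_terminal _ (hin t hkt.le) ht
  calc μ G.ReachT ≤ μ (cyl k q)ᶜ := measure_mono_ae (hsafe.mono fun ω h hR hq ↦ h hq hR)
    _ = 1 - μ (cyl k q) := prob_compl_eq_one_sub (measurableSet_cyl k q)
    _ < 1 := ENNReal.sub_lt_self ENNReal.one_ne_top one_ne_zero hcyl.ne'

lemma IsTrap.exists_witness (hS : G.IsTrap S) {n : ℕ}
    (hv : v ∈ Relation.reachWithin (fun x y ↦ y ∈ G.post x) S n) :
    ∃ (σ1' : G.Strategy G.V1) (σ2' : G.Strategy G.V2),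
      σ1'.Memoryless ∧ σ1'.Deterministic ∧ G.Fair σ2' ∧
      ∀ μ' : Measure (ℕ → V), G.IsPathMeasure σ1' σ2' v μ' → μ' G.ReachT < 1 := by
  obtain ⟨c, hc, hcS, hcreach⟩ :=
    Relation.exists_selector_mapsTo_reachWithin G.post_nonempty hS.exists_mem_post
  have hreach := Relation.iterate_mem_reachWithin hcreach hv
  have hk : c^[n] v ∈ S := by simpa only [Nat.sub_self, Relation.reachWithin_zero] using hreach n
  refine ⟨.pure c hc, .uniform, fun _ _ _ ↦ rfl,
    fun _ x ↦ ⟨c x, fun _ ↦ by simp only [Strategy.pure]; congr⟩, fair_uniform,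
    fun μ hμ ↦ hS.measure_reachT_lt_one hc hcS hk
      (fun i ↦ hS.not_terminal_of_mem_reachWithin (hreach i)) hμ⟩

lemma exists_isTrap_of_measure_reachT_lt_one {σ1 : G.Strategy G.V1} {σ2 : G.Strategy G.V2}
    (hfair : G.Fair σ2) {μ : Measure (ℕ → V)} (hμ : G.IsPathMeasure σ1 σ2 v μ)
    (hlt : μ G.ReachT < 1) :
    ∃ S, G.IsTrap S ∧ ∃ n, v ∈ Relation.reachWithin (fun x y ↦ y ∈ G.post x) S n := by
  have := hμ.1
  have hpos : μ G.ReachTᶜ ≠ 0 := fun h0 ↦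
    hlt.not_ge (by simpa [h0] using measure_univ_le_add_compl (μ := μ) G.ReachT)
  have hVP : ∀ᵐ ω ∂μ, ∀ u ∈ (G.VP : Set V), ∀ y ∈ G.post u, u ∈ infOcc ω → y ∈ infOcc ω :=
    (ae_ball_iff (Set.toFinite _).countable).mpr fun u hu ↦
      (ae_ball_iff (Set.toFinite _).countable).mpr fun y hy ↦
        hμ.ae_mem_infOcc_of_le_step hy fun _ ↦ (step_of_mem_VP σ1 σ2 hu y).ge
  obtain ⟨ω, hωT, h0, hstep, hFP2, hωVP⟩ := Measure.exists_mem_of_measure_ne_zero_of_ae hpos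
    (ae_restrict_of_ae (hμ.ae_start.and (hμ.ae_step_pos.and ((hfair.ae_mem_FP2 hμ).and hVP))))
  have hpost : ∀ t, ω (t + 1) ∈ G.post (ω t) := fun t ↦ mem_post_of_step_pos _ _ (hstep t)
  obtain ⟨x, hx⟩ := infOcc_nonempty ω
  obtain ⟨m, -, hm⟩ := hx 0
  exact ⟨infOcc ω, isTrap_infOcc hωT hpost hFP2 hωVP, m,
    h0 ▸ Relation.mem_reachWithin_of_path hpost (hm ▸ hx)⟩

end StochGame

open StochGame in
/-- If reaching the terminal set has probability `< 1` for some Player 1 strategy and some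
fair Player 2 strategy, then this is witnessed by a memoryless deterministic Player 1
strategy together with some fair Player 2 strategy. -/
theorem exists_memoryless_deterministic_witness
    {V : Type*} [Fintype V] [DecidableEq V] [MeasurableSpace V] [DiscreteMeasurableSpace V]
    (G : StochGame V) (v : V)
    (σ1 : G.Strategy G.V1) (σ2 : G.Strategy G.V2) (hfair : G.Fair σ2)
    (μ : Measure (ℕ → V)) (hμ : G.IsPathMeasure σ1 σ2 v μ) (hlt : μ G.ReachT < 1) :
    ∃ (σ1' : G.Strategy G.V1) (σ2' : G.Strategy G.V2),
      σ1'.Memoryless ∧ σ1'.Deterministic ∧ G.Fair σ2' ∧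
      ∀ μ' : Measure (ℕ → V), G.IsPathMeasure σ1' σ2' v μ' → μ' G.ReachT < 1 := by
  obtain ⟨S, hS, n, hv⟩ := exists_isTrap_of_measure_reachT_lt_one hfair hμ hlt
  exact hS.exists_witness hv
end

section
/- Let G be a stochastic game with rewards that is stopping under fairness, let v ∈ V, and let σ2 be a fair semi-Markov strategy for Player 2. Then for every strategy σ1 ∈ Σ1 there is a semi-Markov strategy σ1* for Player 1 such that E^{σ1,σ2}_{G,v}[rew] = E^{σ1*,σ2}_{G,v}[rew]. -/
open MeasureTheory
open scoped ENNReal Classical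

namespace SGAux
set_option linter.unusedSectionVars false
open StochGame

variable {V : Type*} [Fintype V] [DecidableEq V]

/-- extend a finite tuple to an infinite sequence -/
def ext {n : ℕ} (t : Fin (n + 1) → V) : ℕ → V := fun j => t ⟨min j n, by omega⟩

lemma ext_le {n : ℕ} (t : Fin (n + 1) → V) {j : ℕ} (hj : j ≤ n) :
    ext t j = t ⟨j, by omega⟩ := by
  simp [ext, Nat.min_eq_left hj]

lemma ext_last {n : ℕ} (t : Fin (n + 1) → V) : ext t n = t (Fin.last n) := by
  simp [ext, Fin.last]

lemma hist_length (w : ℕ → V) (i : ℕ) : (hist w i).length = i := by simp [hist]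

lemma hist_congr {w w' : ℕ → V} {i : ℕ} (h : ∀ j < i, w j = w' j) :
    hist w i = hist w' i := by
  simp only [hist]
  exact List.map_congr_left fun a ha => h a (List.mem_range.mp ha)

variable {G : StochGame V}

lemma step_nonneg (σ1 : G.Strategy G.V1) (σ2 : G.Strategy G.V2) (h : List V) (u u' : V) :
    0 ≤ G.step σ1 σ2 h u u' := by
  unfold StochGame.step
  split_ifs <;> first | exact σ1.nonneg _ _ _ | exact σ2.nonneg _ _ _ | exact G.δ_nonneg _ _

lemma step_sum_one (σ1 : G.Strategy G.V1) (σ2 : G.Strategy G.V2) (h : List V) (u : V) :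
    ∑ u' : V, G.step σ1 σ2 h u u' = 1 := by
  unfold StochGame.step
  split_ifs with h1 h2
  · exact σ1.sum_one _ _
  · exact σ2.sum_one _ _
  · have : u ∈ G.VP := by rcases G.cover u with h | h | h <;> tauto
    exact G.prob u this

lemma pref_nonneg (σ1 : G.Strategy G.V1) (σ2 : G.Strategy G.V2) (v : V) (n : ℕ) (w : ℕ → V) :
    0 ≤ G.prefixProb σ1 σ2 v n w := by
  unfold StochGame.prefixProb
  apply mul_nonneg
  · split_ifs <;> norm_num
  · exact Finset.prod_nonneg fun i _ => step_nonneg σ1 σ2 _ _ _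

lemma pref_zero (σ1 : G.Strategy G.V1) (σ2 : G.Strategy G.V2) {v : V} (n : ℕ) {w : ℕ → V}
    (hw : w 0 ≠ v) : G.prefixProb σ1 σ2 v n w = 0 := by
  simp [StochGame.prefixProb, hw]

lemma pref_succ (σ1 : G.Strategy G.V1) (σ2 : G.Strategy G.V2) (v : V) (n : ℕ) (w : ℕ → V) :
    G.prefixProb σ1 σ2 v (n + 1) w =
      G.prefixProb σ1 σ2 v n w * G.step σ1 σ2 (hist w n) (w n) (w (n + 1)) := by
  unfold StochGame.prefixProb
  rw [Finset.prod_range_succ]; ring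

lemma pref_congr (σ1 : G.Strategy G.V1) (σ2 : G.Strategy G.V2) (v : V) {n : ℕ} {w w' : ℕ → V}
    (h : ∀ i ≤ n, w i = w' i) :
    G.prefixProb σ1 σ2 v n w = G.prefixProb σ1 σ2 v n w' := by
  unfold StochGame.prefixProb
  rw [h 0 (Nat.zero_le n)]
  congr 1
  apply Finset.prod_congr rfl
  intro i hi
  have hi' : i < n := Finset.mem_range.mp hi
  rw [hist_congr (fun j hj => h j (by omega)), h i (by omega), h (i + 1) (by omega)]


section Main
variable (G : StochGame V) (σ1 : G.Strategy G.V1) (σ2 : G.Strategy G.V2) (v : V)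

/-- probability that the play is at `u` at time `n` -/
noncomputable def J (n : ℕ) (u : V) : ℝ :=
  ∑ t : Fin (n + 1) → V,
    if t (Fin.last n) = u then G.prefixProb σ1 σ2 v n (ext t) else 0

/-- joint probability of being at `u` at time `n` and stepping to `u'` -/
noncomputable def Nst (n : ℕ) (u u' : V) : ℝ :=
  ∑ t : Fin (n + 1) → V,
    if t (Fin.last n) = u then
      G.prefixProb σ1 σ2 v n (ext t) * G.step σ1 σ2 (hist (ext t) n) (t (Fin.last n)) u'
    else 0

lemma J_nonneg (n : ℕ) (u : V) : 0 ≤ J G σ1 σ2 v n u :=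
  Finset.sum_nonneg fun t _ => by
    split_ifs
    · exact pref_nonneg σ1 σ2 v n (ext t)
    · exact le_rfl

lemma Nst_nonneg (n : ℕ) (u u' : V) : 0 ≤ Nst G σ1 σ2 v n u u' :=
  Finset.sum_nonneg fun t _ => by
    split_ifs
    · exact mul_nonneg (pref_nonneg σ1 σ2 v n (ext t)) (step_nonneg σ1 σ2 _ _ _)
    · exact le_rfl

lemma Nst_sum (n : ℕ) (u : V) : ∑ u' : V, Nst G σ1 σ2 v n u u' = J G σ1 σ2 v n u := by
  unfold Nst J
  rw [Finset.sum_comm]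
  apply Finset.sum_congr rfl
  intro t _
  split_ifs with h
  · rw [← Finset.mul_sum, step_sum_one, mul_one]
  · simp

/-- the extension of `snoc s u'` agrees with the extension of `s` on indices `≤ n` -/
lemma ext_snoc_le {n : ℕ} (s : Fin (n + 1) → V) (x : V) {j : ℕ} (hj : j ≤ n) :
    ext (fun i => Fin.snoc (α := fun _ => V) s x i) j = ext s j := by
  rw [ext_le _ (by omega : j ≤ n + 1), ext_le s hj]
  have : (⟨j, by omega⟩ : Fin (n + 2)) = Fin.castSucc ⟨j, by omega⟩ := rfl
  rw [this, Fin.snoc_castSucc]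

lemma ext_snoc_last {n : ℕ} (s : Fin (n + 1) → V) (x : V) :
    ext (fun i => Fin.snoc (α := fun _ => V) s x i) (n + 1) = x := by
  rw [ext_last]
  exact Fin.snoc_last _ _

/-- the key unfolding of `J` at time `n+1` -/
lemma J_succ (n : ℕ) (u' : V) :
    J G σ1 σ2 v (n + 1) u' = ∑ s : Fin (n + 1) → V,
      G.prefixProb σ1 σ2 v n (ext s) * G.step σ1 σ2 (hist (ext s) n) (s (Fin.last n)) u' := by
  unfold J
  have key := Fintype.sum_equiv (Fin.snocEquiv (fun _ : Fin (n + 2) => V))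
    (fun p : V × (Fin (n + 1) → V) =>
      if p.1 = u' then G.prefixProb σ1 σ2 v (n + 1)
        (ext (fun i => Fin.snoc (α := fun _ => V) p.2 p.1 i)) else 0)
    (fun t : Fin (n + 2) → V =>
      if t (Fin.last (n + 1)) = u' then G.prefixProb σ1 σ2 v (n + 1) (ext t) else 0)
    (fun p => by simp [Fin.snocEquiv])
  rw [← key, Fintype.sum_prod_type_right]
  apply Finset.sum_congr rfl
  intro s _
  rw [Finset.sum_ite_eq' Finset.univ u'
      (fun x => G.prefixProb σ1 σ2 v (n + 1) (ext (fun i => Fin.snoc (α := fun _ => V) s x i))),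
    if_pos (Finset.mem_univ u')]
  have hagree : ∀ j ≤ n, ext (fun i => Fin.snoc (α := fun _ => V) s u' i) j = ext s j :=
    fun j hj => ext_snoc_le s u' hj
  rw [pref_succ, pref_congr σ1 σ2 v hagree,
      hist_congr (fun j hj => hagree j (le_of_lt hj)),
      hagree n le_rfl, ext_last, ext_snoc_last]

/-- fiber decomposition of a sum over tuples -/
lemma fiber_sum {n : ℕ} (X : (Fin (n + 1) → V) → ℝ) :
    ∑ s : Fin (n + 1) → V, X s
      = ∑ u : V, ∑ s : Fin (n + 1) → V, if s (Fin.last n) = u then X s else 0 := by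
  rw [Finset.sum_comm]
  apply Finset.sum_congr rfl
  intro s _
  rw [Finset.sum_ite_eq Finset.univ (s (Fin.last n)) (fun _ => X s), if_pos (Finset.mem_univ _)]


/-- a default distribution supported on successors -/
noncomputable def dflt (u u' : V) : ℝ := G.δ u u' / ∑ x : V, G.δ u x

lemma dflt_denom_pos (u : V) : 0 < ∑ x : V, G.δ u x := by
  obtain ⟨x, hx⟩ := G.post_nonempty u
  exact Finset.sum_pos' (fun i _ => G.δ_nonneg u i) ⟨x, Finset.mem_univ x, hx⟩

lemma dflt_nonneg (u u' : V) : 0 ≤ dflt G u u' :=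
  div_nonneg (G.δ_nonneg u u') (le_of_lt (dflt_denom_pos G u))

lemma dflt_sum (u : V) : ∑ u' : V, dflt G u u' = 1 := by
  unfold dflt
  rw [← Finset.sum_div, div_self (ne_of_gt (dflt_denom_pos G u))]

lemma dflt_support (u u' : V) (h : 0 < dflt G u u') : 0 < G.δ u u' := by
  rcases lt_or_eq_of_le (G.δ_nonneg u u') with h' | h'
  · exact h'
  · exfalso; rw [dflt, ← h'] at h; simp at h

/-- the one-step distribution of the mimicking semi-Markov strategy at time `n` -/
noncomputable def Fdist (n : ℕ) (u u' : V) : ℝ :=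
  if u ∈ G.V1 ∧ 0 < J G σ1 σ2 v n u then Nst G σ1 σ2 v n u u' / J G σ1 σ2 v n u
  else dflt G u u'

lemma Nst_pos_step (n : ℕ) (u u' : V) (h : 0 < Nst G σ1 σ2 v n u u') (hu : u ∈ G.V1) :
    0 < G.δ u u' := by
  have := Finset.exists_lt_of_sum_lt (f := fun _ : Fin (n + 1) → V => (0 : ℝ))
    (by simpa [Nst] using h)
  obtain ⟨t, -, ht⟩ := this
  have ht' : (0 : ℝ) < if t (Fin.last n) = u then
      G.prefixProb σ1 σ2 v n (ext t) * G.step σ1 σ2 (hist (ext t) n) (t (Fin.last n)) u'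
    else 0 := ht
  by_cases hlast : t (Fin.last n) = u
  · rw [if_pos hlast] at ht'
    have hpref := pref_nonneg σ1 σ2 v n (ext t)
    have hstep : 0 < G.step σ1 σ2 (hist (ext t) n) (t (Fin.last n)) u' := by
      by_contra hc
      push_neg at hc
      nlinarith
    rw [hlast] at hstep
    rw [StochGame.step, if_pos hu] at hstep
    exact σ1.support _ u hu u' hstep
  · rw [if_neg hlast] at ht'; exact absurd ht' (lt_irrefl 0)

/-- the mimicking semi-Markov strategy -/
noncomputable def mimic : G.Strategy G.V1 where
  f h cur u' := Fdist G σ1 σ2 v h.length cur u'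
  nonneg h cur u' := by
    simp only [Fdist]
    split_ifs with hc
    · exact div_nonneg (Nst_nonneg G σ1 σ2 v _ _ _) (le_of_lt hc.2)
    · exact dflt_nonneg G cur u'
  sum_one h cur := by
    simp only [Fdist]
    split_ifs with hc
    · rw [← Finset.sum_div, Nst_sum, div_self (ne_of_gt hc.2)]
    · exact dflt_sum G cur
  support h cur hcur u' hpos := by
    simp only [Fdist] at hpos
    split_ifs at hpos with hc
    · have hN : 0 < Nst G σ1 σ2 v h.length cur u' := by
        rcases lt_or_eq_of_le (Nst_nonneg G σ1 σ2 v h.length cur u') with h' | h'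
        · exact h'
        · exfalso; rw [← h', zero_div] at hpos; exact lt_irrefl 0 hpos
      exact Nst_pos_step G σ1 σ2 v _ _ _ hN hcur
    · exact dflt_support G cur u' hpos

lemma mimic_semiMarkov : (mimic G σ1 σ2 v).SemiMarkov := by
  intro v0 h h' cur hlen
  show Fdist G σ1 σ2 v (v0 :: h).length cur = Fdist G σ1 σ2 v (v0 :: h').length cur
  rw [List.length_cons, List.length_cons, hlen]

/-- canonical one-step function at time `n` for the semi-Markov pair -/
noncomputable def sprime (n : ℕ) (u u' : V) : ℝ :=
  if u ∈ G.V1 then Fdist G σ1 σ2 v n u u'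
  else if u ∈ G.V2 then σ2.f (hist (fun _ => v) n) u u'
  else G.δ u u'


lemma sigma2_hist (hsm : σ2.SemiMarkov) {w : ℕ → V} (hw : w 0 = v) (n : ℕ) (u : V) :
    σ2.f (hist w n) u = σ2.f (hist (fun _ => v) n) u := by
  cases n with
  | zero => rfl
  | succ m =>
    have hw' : hist w (m + 1) = w 0 :: (List.range m).map (fun j => w (j + 1)) := by
      simp [hist, List.range_succ_eq_map, Function.comp]
    have hv' : hist (fun _ => v) (m + 1) = v :: List.replicate m v := by
      simp only [hist, List.range_succ_eq_map, List.map_cons, List.map_map]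
      congr 1
      rw [show ((fun _ : ℕ => v) ∘ Nat.succ) = (fun _ : ℕ => v) from rfl]
      simp [List.map_const']
    rw [hw', hv', hw]
    exact hsm v _ _ u (by simp)

lemma step_mimic (hsm : σ2.SemiMarkov) {w : ℕ → V} (hw : w 0 = v) (n : ℕ) (u u' : V) :
    G.step (mimic G σ1 σ2 v) σ2 (hist w n) u u' = sprime G σ1 σ2 v n u u' := by
  unfold StochGame.step sprime
  split_ifs with h1 h2
  · show Fdist G σ1 σ2 v (hist w n).length u u' = _
    rw [hist_length]
  · rw [sigma2_hist G σ2 v hsm hw n u]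
  · rfl

lemma step_orig (hsm : σ2.SemiMarkov) {w : ℕ → V} (hw : w 0 = v) (n : ℕ) {u : V} (u' : V)
    (hu : u ∉ G.V1) :
    G.step σ1 σ2 (hist w n) u u' = sprime G σ1 σ2 v n u u' := by
  unfold StochGame.step sprime
  rw [if_neg hu, if_neg hu]
  split_ifs with h2
  · rw [sigma2_hist G σ2 v hsm hw n u]
  · rfl

lemma Nst_eq (hsm : σ2.SemiMarkov) (n : ℕ) (u u' : V) :
    Nst G σ1 σ2 v n u u' = J G σ1 σ2 v n u * sprime G σ1 σ2 v n u u' := by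
  by_cases hu : u ∈ G.V1
  · by_cases hJ : 0 < J G σ1 σ2 v n u
    · have hs : sprime G σ1 σ2 v n u u' = Nst G σ1 σ2 v n u u' / J G σ1 σ2 v n u := by
        simp [sprime, Fdist, hu, hJ]
      rw [hs, mul_comm, div_mul_cancel₀ _ (ne_of_gt hJ)]
    · have hJ0 : J G σ1 σ2 v n u = 0 :=
        le_antisymm (not_lt.mp hJ) (J_nonneg G σ1 σ2 v n u)
      have hall := (Finset.sum_eq_zero_iff_of_nonneg
        (fun t _ => by
          split_ifs with h
          · exact pref_nonneg σ1 σ2 v n (ext t)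
          · exact le_rfl)).mp hJ0
      rw [hJ0, zero_mul]
      apply Finset.sum_eq_zero
      intro t ht
      split_ifs with h
      · have := hall t ht
        rw [if_pos h] at this
        rw [this, zero_mul]
      · rfl
  · have hterm : ∀ t : Fin (n + 1) → V,
        (if t (Fin.last n) = u then
          G.prefixProb σ1 σ2 v n (ext t) * G.step σ1 σ2 (hist (ext t) n) (t (Fin.last n)) u'
        else 0)
        = (if t (Fin.last n) = u then G.prefixProb σ1 σ2 v n (ext t) else 0)
            * sprime G σ1 σ2 v n u u' := by
      intro t
      split_ifs with h
      · by_cases hp : G.prefixProb σ1 σ2 v n (ext t) = 0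
        · rw [hp, zero_mul, zero_mul]
        · have hv0 : ext t 0 = v := by
            by_contra hc
            exact hp (pref_zero σ1 σ2 n hc)
          rw [h, step_orig G σ1 σ2 v hsm hv0 n u' hu]
      · rw [zero_mul]
    unfold Nst J
    rw [Finset.sum_congr rfl (fun t _ => hterm t), ← Finset.sum_mul]

lemma J_succ_mimic (hsm : σ2.SemiMarkov) (n : ℕ) (u' : V) :
    J G (mimic G σ1 σ2 v) σ2 v (n + 1) u'
      = ∑ u : V, J G (mimic G σ1 σ2 v) σ2 v n u * sprime G σ1 σ2 v n u u' := by
  rw [J_succ]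
  have hterm : ∀ s : Fin (n + 1) → V,
      G.prefixProb (mimic G σ1 σ2 v) σ2 v n (ext s)
        * G.step (mimic G σ1 σ2 v) σ2 (hist (ext s) n) (s (Fin.last n)) u'
      = G.prefixProb (mimic G σ1 σ2 v) σ2 v n (ext s) * sprime G σ1 σ2 v n (s (Fin.last n)) u' := by
    intro s
    by_cases hp : G.prefixProb (mimic G σ1 σ2 v) σ2 v n (ext s) = 0
    · rw [hp, zero_mul, zero_mul]
    · have hv0 : ext s 0 = v := by
        by_contra hc
        exact hp (pref_zero (mimic G σ1 σ2 v) σ2 n hc)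
      rw [step_mimic G σ1 σ2 v hsm hv0]
  rw [Finset.sum_congr rfl (fun s _ => hterm s)]
  rw [fiber_sum (fun s => G.prefixProb (mimic G σ1 σ2 v) σ2 v n (ext s)
      * sprime G σ1 σ2 v n (s (Fin.last n)) u')]
  apply Finset.sum_congr rfl
  intro u _
  have : ∀ s : Fin (n + 1) → V,
      (if s (Fin.last n) = u then
        G.prefixProb (mimic G σ1 σ2 v) σ2 v n (ext s) * sprime G σ1 σ2 v n (s (Fin.last n)) u'
      else 0)
      = (if s (Fin.last n) = u then G.prefixProb (mimic G σ1 σ2 v) σ2 v n (ext s) else 0)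
          * sprime G σ1 σ2 v n u u' := by
    intro s
    split_ifs with h
    · rw [h]
    · rw [zero_mul]
  rw [Finset.sum_congr rfl (fun s _ => this s), ← Finset.sum_mul]
  rfl

lemma J_succ_orig (n : ℕ) (u' : V) :
    J G σ1 σ2 v (n + 1) u' = ∑ u : V, Nst G σ1 σ2 v n u u' := by
  rw [J_succ]
  exact fiber_sum (fun s => G.prefixProb σ1 σ2 v n (ext s)
    * G.step σ1 σ2 (hist (ext s) n) (s (Fin.last n)) u')

/-- the marginal distributions at every time agree -/
lemma J_eq (hsm : σ2.SemiMarkov) : ∀ (n : ℕ) (u : V),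
    J G σ1 σ2 v n u = J G (mimic G σ1 σ2 v) σ2 v n u := by
  intro n
  induction n with
  | zero => intro u; simp [J, StochGame.prefixProb]
  | succ n ih =>
    intro u
    rw [J_succ_orig, J_succ_mimic G σ1 σ2 v hsm]
    apply Finset.sum_congr rfl
    intro x _
    rw [Nst_eq G σ1 σ2 v hsm, ih x]


variable [MeasurableSpace V] [DiscreteMeasurableSpace V]

lemma cyl_measurable (n : ℕ) (w : ℕ → V) : MeasurableSet (cyl n w) := by
  have : cyl n w = ⋂ (i : ℕ) (_ : i ≤ n), (fun ω : ℕ → V => ω i) ⁻¹' {w i} := by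
    ext ω
    simp [cyl, Set.mem_iInter]
  rw [this]
  exact MeasurableSet.iInter fun i => MeasurableSet.iInter fun _ =>
    (measurable_pi_apply i) (measurableSet_singleton (w i))

lemma measure_eval {μ : Measure (ℕ → V)} (hμ : G.IsPathMeasure σ1 σ2 v μ) (n : ℕ) (u : V) :
    μ {ω | ω n = u} = ENNReal.ofReal (J G σ1 σ2 v n u) := by
  classical
  set Ts : Finset (Fin (n + 1) → V) :=
    Finset.univ.filter (fun t => t (Fin.last n) = u) with hTs
  have hset : {ω : ℕ → V | ω n = u} = ⋃ t ∈ Ts, cyl n (ext t) := by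
    ext ω
    constructor
    · intro hω
      have hmem : (fun i : Fin (n + 1) => ω i.val) ∈ (Ts : Set (Fin (n + 1) → V)) := by
        simp only [hTs, Finset.coe_filter, Finset.mem_univ, true_and, Set.mem_setOf_eq]
        exact hω
      have hcyl : ω ∈ cyl n (ext (fun i : Fin (n + 1) => ω i.val)) := by
        intro i hi
        rw [ext_le _ hi]
      exact Set.mem_biUnion hmem hcyl
    · intro hω
      obtain ⟨t, htT, hω⟩ := Set.mem_iUnion₂.mp hω
      have h1 : ω n = ext t n := hω n le_rfl
      rw [ext_last] at h1
      have h2 : t (Fin.last n) = u := by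
        simpa [hTs] using htT
      show ω n = u
      rw [h1, h2]
  have hd : (Ts : Set (Fin (n + 1) → V)).PairwiseDisjoint (fun t => cyl n (ext t)) := by
    intro t ht t' ht' hne
    rw [Function.onFun, Set.disjoint_left]
    intro ω h1 h2
    apply hne
    funext i
    have e1 : ω i.val = ext t i.val := h1 i.val (Nat.lt_succ_iff.mp i.isLt)
    have e2 : ω i.val = ext t' i.val := h2 i.val (Nat.lt_succ_iff.mp i.isLt)
    rw [ext_le _ (Nat.lt_succ_iff.mp i.isLt)] at e1 e2
    have : t ⟨i.val, by omega⟩ = t' ⟨i.val, by omega⟩ := e1 ▸ e2 ▸ rfl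
    simpa using this
  rw [hset, measure_biUnion_finset hd (fun t _ => cyl_measurable n (ext t))]
  have hcyl : ∀ t ∈ Ts, μ (cyl n (ext t)) = ENNReal.ofReal (G.prefixProb σ1 σ2 v n (ext t)) :=
    fun t _ => hμ.2 n (ext t)
  rw [Finset.sum_congr rfl hcyl,
    ← ENNReal.ofReal_sum_of_nonneg (fun t _ => pref_nonneg σ1 σ2 v n (ext t))]
  congr 1
  rw [hTs, Finset.sum_filter]
  rfl

lemma expRew_eq_tsum (μ : Measure (ℕ → V)) (r : V → ℝ) :
    expRew μ r = ∑' i : ℕ, ∑ u : V, ENNReal.ofReal (r u) * μ {ω | ω i = u} := by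
  unfold StochGame.expRew StochGame.rew
  rw [lintegral_tsum (f := fun (i : ℕ) (ω : ℕ → V) => ENNReal.ofReal (r (ω i)))
    (fun i => Measurable.aemeasurable
      ((measurable_of_countable (fun u : V => ENNReal.ofReal (r u))).comp
        (measurable_pi_apply i)))]
  apply tsum_congr
  intro i
  have h1 : ∫⁻ ω, ENNReal.ofReal (r (ω i)) ∂μ
      = ∫⁻ x, ENNReal.ofReal (r x) ∂(Measure.map (fun ω : ℕ → V => ω i) μ) :=
    (lintegral_map (μ := μ) (f := fun x : V => ENNReal.ofReal (r x))
      (g := fun ω : ℕ → V => ω i) (measurable_of_countable _) (measurable_pi_apply i)).symm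
  rw [h1, lintegral_fintype]
  apply Finset.sum_congr rfl
  intro u _
  rw [Measure.map_apply (measurable_pi_apply i) (measurableSet_singleton u)]
  rfl

end Main
end SGAux

open StochGame in
/-- If Player 2 plays a fair semi-Markov strategy, any Player 1 strategy can be mimicked by a
semi-Markov strategy yielding the same expected total reward. -/
theorem exists_semiMarkov_same_expRew
    {V : Type*} [Fintype V] [DecidableEq V] [MeasurableSpace V] [DiscreteMeasurableSpace V]
    (G : StochGame V)
    (P : G.Strategy G.V1 → G.Strategy G.V2 → V → Measure (ℕ → V))
    (hP : ∀ σ1 σ2 w, G.IsPathMeasure σ1 σ2 w (P σ1 σ2 w))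
    (r : V → ℝ) (hr0 : ∀ u, 0 ≤ r u) (hrT : ∀ u, G.Terminal u → r u = 0)
    (hstop : G.StoppingUnderFairness) (v : V)
    (σ2 : G.Strategy G.V2) (hfair : G.Fair σ2) (hsm : σ2.SemiMarkov)
    (σ1 : G.Strategy G.V1) :
    ∃ σ1' : G.Strategy G.V1, σ1'.SemiMarkov ∧
      expRew (P σ1 σ2 v) r = expRew (P σ1' σ2 v) r := by
  classical
  refine ⟨SGAux.mimic G σ1 σ2 v, SGAux.mimic_semiMarkov G σ1 σ2 v, ?_⟩
  rw [SGAux.expRew_eq_tsum (P σ1 σ2 v) r,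
      SGAux.expRew_eq_tsum (P (SGAux.mimic G σ1 σ2 v) σ2 v) r]
  apply tsum_congr
  intro i
  apply Finset.sum_congr rfl
  intro u _
  rw [SGAux.measure_eval G σ1 σ2 v (hP σ1 σ2 v) i u,
      SGAux.measure_eval G (SGAux.mimic G σ1 σ2 v) σ2 v (hP _ σ2 v) i u,
      SGAux.J_eq G σ1 σ2 v hsm i u]
end
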